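/- Let G be a normal generalized group, let H be a generalized group, and let f : G → H be a homomorphism. Then the subset S = {(e_G(g), f(g)) : g ∈ G} of the product G × H is closed under componentwise multiplication, and for all a, b ∈ G one has (e_G(a), f(a))·(e_G(b), f(b)) = (e_G(a·b), f(a·b)); moreover S is closed under the componentwise identity map (e_G(x), e_H(y)) and the componentwise inverse map (x⁻¹, y⁻¹), so that S is itself a generalized group. -/

import Mathlib

/-!
By uniqueness of identities and of inverses in `H`, a homomorphism sends `e g` to `e (f g)` and
`g⁻¹` to `(f g)⁻¹`; normality makes `g ↦ e g` multiplicative. Hence `(e g, f g)` is closed under the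
three componentwise operations, with witnesses `a * b`, `e a` and `a⁻¹`.
-/

/-- A generalized group: a set with an associative multiplication such that each
element `x` has a unique identity `e x` (with `x * e x = e x * x = x`) and an
inverse `inv x` (with `x * inv x = inv x * x = e x`). -/
structure GeneralizedGroup (G : Type*) where
  mul : G → G → G
  e : G → G
  inv : G → G
  mul_assoc : ∀ x y z : G, mul (mul x y) z = mul x (mul y z)
  mul_e : ∀ x : G, mul x (e x) = x
  e_mul : ∀ x : G, mul (e x) x = x
  e_unique : ∀ x u : G, mul x u = x → mul u x = x → u = e x
  mul_inv : ∀ x : G, mul x (inv x) = e x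
  inv_mul : ∀ x : G, mul (inv x) x = e x

namespace GeneralizedGroup

variable {G H : Type*}

def IsNormal (GG : GeneralizedGroup G) : Prop :=
  ∀ x y : G, GG.e (GG.mul x y) = GG.mul (GG.e x) (GG.e y)

def IsHom (GGg : GeneralizedGroup G) (GGh : GeneralizedGroup H) (f : G → H) : Prop :=
  ∀ a b : G, f (GGg.mul a b) = GGh.mul (f a) (f b)

def graph (GGg : GeneralizedGroup G) (f : G → H) : Set (G × H) :=
  {p | ∃ g : G, p = (GGg.e g, f g)}

section Basic

variable (GG : GeneralizedGroup G)

lemma e_mul_self (x : G) : GG.mul (GG.e x) (GG.e x) = GG.e x :=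
  GG.e_unique x _ (by rw [← GG.mul_assoc, GG.mul_e, GG.mul_e])
    (by rw [GG.mul_assoc, GG.e_mul, GG.e_mul])

lemma e_e (x : G) : GG.e (GG.e x) = GG.e x :=
  (GG.e_unique _ _ (GG.e_mul_self x) (GG.e_mul_self x)).symm

variable {GG}

lemma e_eq_of_mul_eq_e {x a : G} (h₁ : GG.mul x a = GG.e x) (h₂ : GG.mul a x = GG.e x) :
    GG.e a = GG.e x := by
  have hleft : GG.mul (GG.e x) (GG.e a) = GG.e x := by
    rw [← h₁, GG.mul_assoc, GG.mul_e]
  have hright : GG.mul (GG.e a) (GG.e x) = GG.e x := by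
    rw [← h₂, ← GG.mul_assoc, GG.e_mul]
  rw [GG.e_unique _ _ hleft hright, GG.e_e]

lemma eq_inv_of_mul_eq_e {x a : G} (h₁ : GG.mul x a = GG.e x) (h₂ : GG.mul a x = GG.e x) :
    a = GG.inv x := by
  have hinv : GG.e (GG.inv x) = GG.e x := e_eq_of_mul_eq_e (GG.mul_inv x) (GG.inv_mul x)
  calc a = GG.mul a (GG.e x) := by rw [← e_eq_of_mul_eq_e h₁ h₂, GG.mul_e]
    _ = GG.mul (GG.mul a x) (GG.inv x) := by rw [← GG.mul_inv, GG.mul_assoc]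
    _ = GG.inv x := by rw [h₂, ← hinv, GG.e_mul]

variable (GG)

lemma e_inv (x : G) : GG.e (GG.inv x) = GG.e x :=
  e_eq_of_mul_eq_e (GG.mul_inv x) (GG.inv_mul x)

lemma inv_e (x : G) : GG.inv (GG.e x) = GG.e x := by
  have h : GG.mul (GG.e x) (GG.e x) = GG.e (GG.e x) := by rw [GG.e_mul_self, GG.e_e]
  exact (eq_inv_of_mul_eq_e h h).symm

end Basic

section Hom

variable {GGg : GeneralizedGroup G} {GGh : GeneralizedGroup H} {f : G → H}

lemma IsHom.map_e (hf : IsHom GGg GGh f) (g : G) : f (GGg.e g) = GGh.e (f g) :=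
  GGh.e_unique _ _ (by rw [← hf, GGg.mul_e]) (by rw [← hf, GGg.e_mul])

lemma IsHom.map_inv (hf : IsHom GGg GGh f) (g : G) : f (GGg.inv g) = GGh.inv (f g) :=
  eq_inv_of_mul_eq_e (by rw [← hf, GGg.mul_inv, hf.map_e])
    (by rw [← hf, GGg.inv_mul, hf.map_e])

lemma graph_mul_pair (hG : GGg.IsNormal) (hf : IsHom GGg GGh f) (a b : G) :
    (GGg.mul (GGg.e a) (GGg.e b), GGh.mul (f a) (f b)) =
      (GGg.e (GGg.mul a b), f (GGg.mul a b)) := by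
  rw [hG, hf]

lemma mul_mem_graph (hG : GGg.IsNormal) (hf : IsHom GGg GGh f) {p q : G × H}
    (hp : p ∈ graph GGg f) (hq : q ∈ graph GGg f) :
    (GGg.mul p.1 q.1, GGh.mul p.2 q.2) ∈ graph GGg f := by
  obtain ⟨a, rfl⟩ := hp
  obtain ⟨b, rfl⟩ := hq
  exact ⟨GGg.mul a b, graph_mul_pair hG hf a b⟩

lemma e_mem_graph (hf : IsHom GGg GGh f) {p : G × H} (hp : p ∈ graph GGg f) :
    (GGg.e p.1, GGh.e p.2) ∈ graph GGg f := by
  obtain ⟨a, rfl⟩ := hp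
  exact ⟨GGg.e a, by rw [hf.map_e]⟩

lemma inv_mem_graph (hf : IsHom GGg GGh f) {p : G × H} (hp : p ∈ graph GGg f) :
    (GGg.inv p.1, GGh.inv p.2) ∈ graph GGg f := by
  obtain ⟨a, rfl⟩ := hp
  exact ⟨GGg.inv a, by rw [GGg.inv_e, GGg.e_inv, hf.map_inv]⟩

end Hom

end GeneralizedGroup

theorem generalizedGroup_hom_graph_generalizedGroup_general {G H : Type*}
    (GGg : GeneralizedGroup G) (GGh : GeneralizedGroup H)
    (hnormal : ∀ x y : G, GGg.e (GGg.mul x y) = GGg.mul (GGg.e x) (GGg.e y))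
    (f : G → H)
    (hf : ∀ a b : G, f (GGg.mul a b) = GGh.mul (f a) (f b)) :
    (∀ p ∈ {p : G × H | ∃ g : G, p = (GGg.e g, f g)},
      ∀ q ∈ {p : G × H | ∃ g : G, p = (GGg.e g, f g)},
        (GGg.mul p.1 q.1, GGh.mul p.2 q.2) ∈ {p : G × H | ∃ g : G, p = (GGg.e g, f g)}) ∧
    (∀ a b : G, (GGg.mul (GGg.e a) (GGg.e b), GGh.mul (f a) (f b)) =
        (GGg.e (GGg.mul a b), f (GGg.mul a b))) ∧
    (∀ p ∈ {p : G × H | ∃ g : G, p = (GGg.e g, f g)},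
        (GGg.e p.1, GGh.e p.2) ∈ {p : G × H | ∃ g : G, p = (GGg.e g, f g)}) ∧
    (∀ p ∈ {p : G × H | ∃ g : G, p = (GGg.e g, f g)},
        (GGg.inv p.1, GGh.inv p.2) ∈ {p : G × H | ∃ g : G, p = (GGg.e g, f g)}) :=
  ⟨fun _ hp _ hq => GeneralizedGroup.mul_mem_graph hnormal hf hp hq,
    GeneralizedGroup.graph_mul_pair hnormal hf,
    fun _ hp => GeneralizedGroup.e_mem_graph hf hp,
    fun _ hp => GeneralizedGroup.inv_mem_graph hf hp⟩

/-- For a homomorphism `f` from a normal generalized group `G` to a generalized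
group `H`, the set `S = {(e g, f g) : g ∈ G}` is closed under componentwise
multiplication (with `(e a, f a) ∘ (e b, f b) = (e (a*b), f (a*b))`),
componentwise identity and componentwise inversion, so `S` is itself a
generalized group. -/
theorem generalizedGroup_hom_graph_generalizedGroup {G H : Type*} [Nonempty G] [Nonempty H]
    (GGg : GeneralizedGroup G) (GGh : GeneralizedGroup H)
    (hnormal : ∀ x y : G, GGg.e (GGg.mul x y) = GGg.mul (GGg.e x) (GGg.e y))
    (f : G → H)
    (hf : ∀ a b : G, f (GGg.mul a b) = GGh.mul (f a) (f b)) :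
    (∀ p ∈ {p : G × H | ∃ g : G, p = (GGg.e g, f g)},
      ∀ q ∈ {p : G × H | ∃ g : G, p = (GGg.e g, f g)},
        (GGg.mul p.1 q.1, GGh.mul p.2 q.2) ∈ {p : G × H | ∃ g : G, p = (GGg.e g, f g)}) ∧
    (∀ a b : G, (GGg.mul (GGg.e a) (GGg.e b), GGh.mul (f a) (f b)) =
        (GGg.e (GGg.mul a b), f (GGg.mul a b))) ∧
    (∀ p ∈ {p : G × H | ∃ g : G, p = (GGg.e g, f g)},
        (GGg.e p.1, GGh.e p.2) ∈ {p : G × H | ∃ g : G, p = (GGg.e g, f g)}) ∧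
    (∀ p ∈ {p : G × H | ∃ g : G, p = (GGg.e g, f g)},
        (GGg.inv p.1, GGh.inv p.2) ∈ {p : G × H | ∃ g : G, p = (GGg.e g, f g)}) :=
  generalizedGroup_hom_graph_generalizedGroup_general GGg GGh hnormal f hf
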